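/- arXiv:math/0505631 — 2 statements merged into one kernel-verified Lean document; each statement's English description precedes it below -/
import Mathlib

section
/- For the iterated Latin hypercube sampling sequence with k ≥ 2 coordinates, let h : [0,1] → ℝ be a monotone (nondecreasing or nonincreasing) function with ∫_0^1 h(x)² dx < ∞. Then for every T ≥ 0, Cov(h(U_{T+1}^{(1)}), h(U_{T+1}^{(2)})) ≤ Cov(h(U_T^{(1)}), h(U_T^{(2)})); equivalently (since each U_t^{(j)} is Uniform(0,1), so the variances do not depend on T), if h is nonconstant on a set of positive Lebesgue measure, the correlation Corr(h(U_T^{(1)}), h(U_T^{(2)})) is nonincreasing as a function of T. -/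
/-!
Since `σ_T` is uniform and independent of `U_T`, conditioning on it gives
`E[Φ(U_{T+1})] = (1/k!) ∑_π E[Φ((π + U_T)/k)]`. In particular every `U_T⁽ʲ⁾` stays uniform,
so only the mixed moment `E[f(U_T⁽ⁱ⁾) g(U_T⁽ʲ⁾)]` of bounded monotone `f`, `g` can change,
and the step `T → T + 1` of its monotonicity follows from the step `T - 1 → T` applied to the
still monotone functions `f((π i + ·)/k)`, `g((π j + ·)/k)`. At `T = 0`, with
`u a = ∫₀¹ f((a + x)/k) dx` and `v a` likewise, the moment at time 1 is the average of
`u (π i) * v (π j)` over permutations, i.e. a draw without replacement; since `u` and `v` are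
both monotone, Chebyshev's sum inequality bounds it by `(∑ u / k) (∑ v / k) = ∫₀¹ f ∫₀¹ g`,
the moment at time 0. A function monotone on `[0, 1]` agrees there with a bounded monotone
function on `ℝ`, and the antitone case follows by negating `h₀`.
-/

open MeasureTheory ProbabilityTheory

instance {k : ℕ} : MeasurableSpace (Equiv.Perm (Fin k)) := ⊤

/-- The iterated Latin hypercube sampling (ILHS) recursion:
`U₀` has i.i.d. Uniform(0,1) coordinates and
`U_{t+1}⁽ʲ⁾ = (σ_t(j) + U_t⁽ʲ⁾)/k`. -/
noncomputable def ilhs {Ω : Type*} {k : ℕ} (U0 : Fin k → Ω → ℝ)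
    (σ : ℕ → Ω → Equiv.Perm (Fin k)) : ℕ → Fin k → Ω → ℝ
  | 0 => U0
  | t + 1 => fun j ω => (((σ t ω j : ℕ) : ℝ) + ilhs U0 σ t j ω) / k

/-- Value types for the joint family consisting of the initial uniforms and the random
permutations. -/
def ilhsβ (k : ℕ) : Fin k ⊕ ℕ → Type
  | Sum.inl _ => ℝ
  | Sum.inr _ => Equiv.Perm (Fin k)

instance ilhsβMeasurableSpace (k : ℕ) : ∀ x, MeasurableSpace (ilhsβ k x)
  | Sum.inl _ => (inferInstance : MeasurableSpace ℝ)
  | Sum.inr _ => (inferInstance : MeasurableSpace (Equiv.Perm (Fin k)))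

/-- The joint family consisting of the initial uniforms and the random permutations. -/
def ilhsFam {Ω : Type*} {k : ℕ} (U0 : Fin k → Ω → ℝ)
    (σ : ℕ → Ω → Equiv.Perm (Fin k)) : ∀ x : Fin k ⊕ ℕ, Ω → ilhsβ k x
  | Sum.inl j => U0 j
  | Sum.inr t => σ t

/-- The defining hypotheses of the ILHS sequence: the initial coordinates are
Uniform(0,1), each `σ_t` is a uniformly distributed random permutation of
`{0, …, k−1}`, and all of these are mutually independent. -/
def IsILHS {Ω : Type*} [MeasurableSpace Ω] (μ : Measure Ω) {k : ℕ}
    (U0 : Fin k → Ω → ℝ) (σ : ℕ → Ω → Equiv.Perm (Fin k)) : Prop :=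
  (∀ j, Measurable (U0 j)) ∧ (∀ t, Measurable (σ t)) ∧
  (∀ j, μ.map (U0 j) = volume.restrict (Set.Ioo (0 : ℝ) 1)) ∧
  (∀ t (π : Equiv.Perm (Fin k)), μ {ω | σ t ω = π} = ((Nat.factorial k : ENNReal))⁻¹) ∧
  iIndepFun (ilhsFam U0 σ) μ

/-- Covariance of two real-valued functions with respect to a measure. -/
noncomputable def covar {Ω : Type*} [MeasurableSpace Ω] (μ : Measure Ω) (f g : Ω → ℝ) : ℝ :=
  (∫ ω, f ω * g ω ∂μ) - (∫ ω, f ω ∂μ) * ∫ ω, g ω ∂μ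

instance {k : ℕ} : DiscreteMeasurableSpace (Equiv.Perm (Fin k)) :=
  ⟨fun _ => MeasurableSpace.measurableSet_top⟩

section Permutations

open Finset Equiv
open scoped Nat

variable {α : Type*} [Fintype α] [DecidableEq α]

lemma sum_perm_apply_eq (u : α → ℝ) (i j : α) :
    ∑ π : Perm α, u (π i) = ∑ π : Perm α, u (π j) := by
  rw [← Equiv.sum_comp (Equiv.mulRight (swap i j))]
  simp [Perm.mul_apply]

lemma card_mul_sum_perm_apply (u : α → ℝ) (j : α) :
    (Fintype.card α : ℝ) * ∑ π : Perm α, u (π j) = (Fintype.card α)! * ∑ a, u a := by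
  calc (Fintype.card α : ℝ) * ∑ π : Perm α, u (π j) = ∑ i, ∑ π : Perm α, u (π i) := by
        simp [sum_perm_apply_eq u _ j]
    _ = ∑ π : Perm α, ∑ a, u a := by
        rw [sum_comm]; simp only [Equiv.sum_comp]
    _ = _ := by simp [Fintype.card_perm]

lemma sum_perm_apply_mul_apply_eq (u v : α → ℝ) {i j j' : α} (hj : j ≠ i) (hj' : j' ≠ i) :
    ∑ π : Perm α, u (π i) * v (π j) = ∑ π : Perm α, u (π i) * v (π j') := by
  rw [← Equiv.sum_comp (Equiv.mulRight (swap j j'))]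
  simp [Perm.mul_apply, swap_apply_of_ne_of_ne hj.symm hj'.symm]

lemma card_mul_sum_perm_apply_mul_apply (u v : α → ℝ) {i j : α} (hij : i ≠ j) :
    (Fintype.card α : ℝ) * (Fintype.card α - 1) * ∑ π : Perm α, u (π i) * v (π j) =
      (Fintype.card α)! * ((∑ a, u a) * (∑ a, v a) - ∑ a, u a * v a) := by
  let S : α → ℝ := fun j' => ∑ π : Perm α, u (π i) * v (π j')
  have hsplit : ∑ j', S j' = S i + ((Fintype.card α : ℝ) - 1) * S j := by
    rw [← add_sum_erase _ _ (mem_univ i), sum_congr rfl fun j' hj' =>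
      sum_perm_apply_mul_apply_eq u v (ne_of_mem_erase hj') hij.symm, sum_const,
      card_erase_of_mem (mem_univ i), card_univ, nsmul_eq_mul,
      Nat.cast_sub (Fintype.card_pos_iff.2 ⟨i⟩)]
    simp [S]
  have htotal : ∑ j', S j' = (∑ π : Perm α, u (π i)) * ∑ b, v b := by
    simp only [S, ← mul_sum, sum_mul, Equiv.sum_comp, sum_comm (s := univ (α := α))]
  have hu := card_mul_sum_perm_apply u i
  have huv := card_mul_sum_perm_apply (fun a => u a * v a) i
  linear_combination (Fintype.card α : ℝ) * (htotal.symm.trans hsplit).symm + (∑ b, v b) * hu - huv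

lemma card_sq_mul_sum_perm_apply_mul_apply_le {u v : α → ℝ} (huv : Monovary u v) {i j : α}
    (hij : i ≠ j) :
    (Fintype.card α : ℝ) ^ 2 * ∑ π : Perm α, u (π i) * v (π j) ≤
      (Fintype.card α)! * ((∑ a, u a) * ∑ a, v a) := by
  have hn : (1 : ℝ) < Fintype.card α := by exact_mod_cast Fintype.one_lt_card_iff.2 ⟨i, j, hij⟩
  have hcheb := huv.sum_mul_sum_le_card_mul_sum
  have hid := card_mul_sum_perm_apply_mul_apply u v hij
  have hfac : (0 : ℝ) ≤ (Fintype.card α)! := by positivity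
  refine le_of_mul_le_mul_left ?_ (sub_pos.2 hn)
  nlinarith [mul_le_mul_of_nonneg_left hcheb hfac]

end Permutations

section CellIntegrals

open intervalIntegral

lemma sum_integral_comp_add_div {f : ℝ → ℝ} (hf : IntervalIntegrable f volume 0 1) (k : ℕ) :
    ∑ a : Fin k, ∫ x in (0 : ℝ)..1, f (((a : ℕ) + x) / k) = k * ∫ x in (0 : ℝ)..1, f x := by
  rcases k.eq_zero_or_pos with rfl | hk
  · simp
  have hk' : (k : ℝ) ≠ 0 := by positivity
  have hcell : ∀ a : ℕ, ∫ x in (0 : ℝ)..1, f ((a + x) / k) =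
      k * ∫ x in (a / k : ℝ)..((a + 1 : ℕ) / k), f x := by
    intro a
    simp only [add_div, integral_comp_add_div f hk', smul_eq_mul]
    push_cast
    ring_nf
  have hmem : ∀ b ≤ k, ((b : ℕ) / k : ℝ) ∈ Set.uIcc 0 1 := fun b hb => by
    rw [Set.uIcc_of_le zero_le_one]
    exact ⟨by positivity, div_le_one_of_le₀ (by exact_mod_cast hb) (by positivity)⟩
  have hsub : ∀ a < k, IntervalIntegrable f volume ((a : ℕ) / k : ℝ) ((a + 1 : ℕ) / k) :=
    fun a ha => hf.mono_set (Set.uIcc_subset_uIcc (hmem a ha.le) (hmem (a + 1) ha))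
  rw [Fin.sum_univ_eq_sum_range (fun a => ∫ x in (0 : ℝ)..1, f ((a + x) / k)),
    Finset.sum_congr rfl fun a _ => hcell a, ← Finset.mul_sum,
    sum_integral_adjacent_intervals (a := fun a : ℕ => (a : ℝ) / k) hsub]
  simp [hk']

lemma monotone_integral_comp_add_div {f : ℝ → ℝ} (hf : Monotone f) (k : ℕ) :
    Monotone fun a : ℝ => ∫ x in (0 : ℝ)..1, f ((a + x) / k) := fun a b hab =>
  integral_mono zero_le_one ((hf.comp fun _ _ h => by gcongr).intervalIntegrable)
    ((hf.comp fun _ _ h => by gcongr).intervalIntegrable) fun x => hf (by gcongr)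

lemma add_div_mem_Ioo {a k : ℕ} (hak : a < k) {x : ℝ} (hx : x ∈ Set.Ioo 0 1) :
    (a + x) / k ∈ Set.Ioo 0 1 := by
  have hk : (0 : ℝ) < k := by exact_mod_cast (Nat.zero_le a).trans_lt hak
  have hak' : (a : ℝ) + 1 ≤ k := by exact_mod_cast hak
  exact ⟨by have := hx.1; positivity, (div_lt_one hk).2 (by linarith [hx.2])⟩

end CellIntegrals

lemma integral_comp_eq_sum_measureReal_mul_of_indepFun {Ω α β : Type*} [MeasurableSpace Ω]
    {μ : Measure Ω} [Fintype α] [MeasurableSpace α] [MeasurableSingletonClass α]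
    [MeasurableSpace β] {Y : Ω → α} {X : Ω → β} (hYX : IndepFun Y X μ) (hY : Measurable Y)
    {F : α → β → ℝ} (hF : ∀ a, Measurable (F a)) (hFX : ∀ a, Integrable (fun ω => F a (X ω)) μ) :
    ∫ ω, F (Y ω) (X ω) ∂μ = ∑ a, μ.real (Y ⁻¹' {a}) * ∫ ω, F a (X ω) ∂μ := by
  classical
  have hdecomp : (fun ω => F (Y ω) (X ω)) =
      fun ω => ∑ a, ({a} : Set α).indicator 1 (Y ω) * F a (X ω) := by
    funext ω
    rw [Finset.sum_eq_single (Y ω) (fun a _ ha => by simp [Ne.symm ha]) (by simp)]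
    simp
  have hind : ∀ a : α, Measurable (({a} : Set α).indicator (1 : α → ℝ)) :=
    fun a => measurable_one.indicator (measurableSet_singleton a)
  rw [hdecomp, integral_finsetSum _ fun a _ => ?_]
  · refine Finset.sum_congr rfl fun a _ => ?_
    have hmul := (hYX.comp (hind a) (hF a)).integral_fun_mul_eq_mul_integral
      ((hind a).comp hY).aestronglyMeasurable (hFX a).aestronglyMeasurable
    simp only [Function.comp_apply] at hmul
    rw [hmul, ← integral_indicator_one (hY (measurableSet_singleton a))]
    rfl
  · refine (hFX a).bdd_mul ((hind a).comp hY).aestronglyMeasurable (c := 1)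
      (ae_of_all _ fun ω => ?_)
    by_cases hω : Y ω = a <;> simp [hω]

lemma MonotoneOn.exists_bounded_monotone_eqOn {f : ℝ → ℝ} {a b : ℝ} (hab : a ≤ b)
    (hf : MonotoneOn f (Set.Icc a b)) :
    ∃ F : ℝ → ℝ, Monotone F ∧ (∃ M, ∀ x, |F x| ≤ M) ∧ Set.EqOn F f (Set.Icc a b) := by
  refine ⟨Set.IccExtend hab fun x => f x, (Set.monotoneOn_iff_monotone.1 hf).IccExtend hab,
    ⟨max |f a| |f b|, fun x => ?_⟩, fun x hx => Set.IccExtend_of_mem hab _ hx⟩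
  have hx := (Set.projIcc a b hab x).2
  exact abs_le_max_abs_abs (hf (Set.left_mem_Icc.2 hab) hx hx.1)
    (hf hx (Set.right_mem_Icc.2 hab) hx.2)

section Covariance

variable {Ω : Type*} [MeasurableSpace Ω] {μ : Measure Ω}

lemma covar_congr_ae {f f' g g' : Ω → ℝ} (hf : f =ᵐ[μ] f') (hg : g =ᵐ[μ] g') :
    covar μ f g = covar μ f' g' := by
  rw [covar, covar, integral_congr_ae hf, integral_congr_ae hg,
    integral_congr_ae (f := fun ω => f ω * g ω) (g := fun ω => f' ω * g' ω) (hf.mul hg)]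

lemma covar_neg_neg (f g : Ω → ℝ) :
    covar μ (fun ω => -f ω) (fun ω => -g ω) = covar μ f g := by
  simp only [covar, neg_mul_neg, integral_neg]

end Covariance

section ILHS

open scoped Nat

variable {Ω : Type*} {k : ℕ} {U0 : Fin k → Ω → ℝ} {σ : ℕ → Ω → Equiv.Perm (Fin k)}

lemma measurable_ilhs {m : MeasurableSpace Ω} {T : ℕ} (hU : ∀ j, Measurable[m] (U0 j))
    (hσ : ∀ t < T, Measurable[m] (σ t)) {t : ℕ} (ht : t ≤ T) (j : Fin k) :
    Measurable[m] (ilhs U0 σ t j) := by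
  induction t with
  | zero => exact hU j
  | succ t ih =>
    have hσj : Measurable[m] fun ω => ((σ t ω j : ℕ) : ℝ) :=
      (measurable_of_countable (fun π : Equiv.Perm (Fin k) => ((π j : ℕ) : ℝ))).comp
        (hσ t ht)
    exact (hσj.add (ih (by omega))).div_const _

lemma ilhs_mem_Ioo (t : ℕ) (j : Fin k) {ω : Ω} (hω : U0 j ω ∈ Set.Ioo 0 1) :
    ilhs U0 σ t j ω ∈ Set.Ioo 0 1 := by
  induction t with
  | zero => exact hω
  | succ t ih => exact add_div_mem_Ioo (σ t ω j).isLt ih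

variable [MeasurableSpace Ω] {μ : Measure Ω}

lemma IsILHS.ae_ilhs_mem_Ioo (h : IsILHS μ U0 σ) (t : ℕ) (j : Fin k) :
    ∀ᵐ ω ∂μ, ilhs U0 σ t j ω ∈ Set.Ioo 0 1 := by
  obtain ⟨hU, -, hlaw, -, -⟩ := h
  have hU0 : ∀ᵐ ω ∂μ, U0 j ω ∈ Set.Ioo 0 1 :=
    ae_of_ae_map (hU j).aemeasurable (by rw [hlaw j]; exact ae_restrict_mem measurableSet_Ioo)
  filter_upwards [hU0] with ω hω using ilhs_mem_Ioo t j hω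

lemma IsILHS.indepFun_perm_ilhs (h : IsILHS μ U0 σ) (T : ℕ) :
    IndepFun (σ T) (fun ω j => ilhs U0 σ T j ω) μ := by
  obtain ⟨hU, hσ, -, -, hind⟩ := h
  let m : Fin k ⊕ ℕ → MeasurableSpace Ω := fun i =>
    (ilhsβMeasurableSpace k i).comap (ilhsFam U0 σ i)
  have hle : ∀ i, m i ≤ ‹MeasurableSpace Ω› := by
    rintro (j | t)
    · exact (hU j).comap_le
    · exact (hσ t).comap_le
  -- `U_T` is a function of `U0` and `σ 0, …, σ (T - 1)` only.
  let past : Set (Fin k ⊕ ℕ) := Set.range Sum.inl ∪ Sum.inr '' Set.Iio T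
  have hdisj : Disjoint {Sum.inr T} past := by
    simp [past, Set.disjoint_singleton_left]
  have hpast := indep_iSup_of_disjoint hle ((iIndepFun_iff_iIndep _ _ _).1 hind) hdisj
  have hle_past : ∀ i ∈ past, m i ≤ ⨆ i ∈ past, m i := fun i hi =>
    le_iSup₂ (f := fun i (_ : i ∈ past) => m i) i hi
  rw [IndepFun_iff_Indep]
  refine indep_of_indep_of_le_right (indep_of_indep_of_le_left hpast ?_) ?_
  · exact le_iSup₂ (f := fun i (_ : i ∈ ({Sum.inr T} : Set _)) => m i) (Sum.inr T) rfl
  · -- `measurable_pi_lambda` takes the σ-algebra on `Ω` as an instance, and this is not the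
    -- ambient one.
    refine Measurable.comap_le (@measurable_pi_lambda Ω (Fin k) (fun _ => ℝ) (⨆ i ∈ past, m i) _
      _ fun j => measurable_ilhs (T := T) (fun j => ?_) (fun t ht => ?_) le_rfl j)
    · exact (comap_measurable (U0 j)).mono (hle_past (.inl j) (by simp [past])) le_rfl
    · exact (comap_measurable (σ t)).mono (hle_past (.inr t) (by simp [past, ht])) le_rfl

lemma IsILHS.integral_comp_U0 (h : IsILHS μ U0 σ) {f : ℝ → ℝ} (hf : Measurable f) (j : Fin k) :
    ∫ ω, f (U0 j ω) ∂μ = ∫ x in (0 : ℝ)..1, f x := by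
  rw [← integral_map (h.1 j).aemeasurable hf.aestronglyMeasurable, h.2.2.1 j,
    intervalIntegral.integral_of_le zero_le_one, integral_Ioc_eq_integral_Ioo]

lemma IsILHS.integral_mul_U0 (h : IsILHS μ U0 σ) {i j : Fin k} (hij : i ≠ j) {f g : ℝ → ℝ}
    (hf : Measurable f) (hg : Measurable g) :
    ∫ ω, f (U0 i ω) * g (U0 j ω) ∂μ = (∫ x in (0 : ℝ)..1, f x) * ∫ x in (0 : ℝ)..1, g x := by
  have hind : IndepFun (U0 i) (U0 j) μ :=
    h.2.2.2.2.indepFun (i := Sum.inl i) (j := Sum.inl j) (by simpa using hij)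
  refine ((hind.comp hf hg).integral_fun_mul_eq_mul_integral
    (hf.comp (h.1 i)).aestronglyMeasurable (hg.comp (h.1 j)).aestronglyMeasurable).trans ?_
  exact congr_arg₂ _ (h.integral_comp_U0 hf i) (h.integral_comp_U0 hg j)

variable [IsFiniteMeasure μ]

lemma IsILHS.integral_ilhs_succ (h : IsILHS μ U0 σ) {Φ : (Fin k → ℝ) → ℝ} (hΦ : Measurable Φ)
    {M : ℝ} (hΦM : ∀ x, |Φ x| ≤ M) (T : ℕ) :
    ∫ ω, Φ (fun j => ilhs U0 σ (T + 1) j ω) ∂μ =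
      (k ! : ℝ)⁻¹ * ∑ π : Equiv.Perm (Fin k),
        ∫ ω, Φ (fun j => ((π j : ℕ) + ilhs U0 σ T j ω) / k) ∂μ := by
  have hσ := h.2.1
  have hshift : ∀ π : Equiv.Perm (Fin k),
      Measurable fun x : Fin k → ℝ => Φ (fun j => ((π j : ℕ) + x j) / k) :=
    fun π => hΦ.comp (by fun_prop)
  have hX : Measurable fun ω j => ilhs U0 σ T j ω :=
    measurable_pi_lambda _ fun j => measurable_ilhs h.1 (fun t _ => hσ t) le_rfl j
  rw [Finset.mul_sum]
  refine (integral_comp_eq_sum_measureReal_mul_of_indepFun (h.indepFun_perm_ilhs T) (hσ T)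
    hshift fun π => ?_).trans (Finset.sum_congr rfl fun π _ => ?_)
  · exact .of_bound ((hshift π).comp hX).aestronglyMeasurable M (ae_of_all _ fun ω => hΦM _)
  · congr 1
    rw [measureReal_def, show σ T ⁻¹' {π} = {ω | σ T ω = π} from rfl, h.2.2.2.1 T π,
      ENNReal.toReal_inv, ENNReal.toReal_natCast]

lemma IsILHS.integral_comp_ilhs (h : IsILHS μ U0 σ) {f : ℝ → ℝ} (hf : Measurable f) {M : ℝ}
    (hfM : ∀ x, |f x| ≤ M) (T : ℕ) (j : Fin k) :
    ∫ ω, f (ilhs U0 σ T j ω) ∂μ = ∫ x in (0 : ℝ)..1, f x := by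
  induction T generalizing f with
  | zero => exact h.integral_comp_U0 hf j
  | succ T ih =>
    have hk : (k : ℝ) ≠ 0 := by have := j.pos; positivity
    let w : Fin k → ℝ := fun a => ∫ x in (0 : ℝ)..1, f (((a : ℕ) + x) / k)
    have hterm : ∀ π : Equiv.Perm (Fin k),
        ∫ ω, f (((π j : ℕ) + ilhs U0 σ T j ω) / k) ∂μ = w (π j) :=
      fun π => ih (f := fun x => f (((π j : ℕ) + x) / k)) (hf.comp (by fun_prop)) fun _ => hfM _
    have hfi : IntervalIntegrable f volume 0 1 :=
      (intervalIntegrable_iff_integrableOn_Ioc_of_le zero_le_one).2 <|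
        .of_bound measure_Ioc_lt_top hf.aestronglyMeasurable M (ae_of_all _ hfM)
    have hsum := card_mul_sum_perm_apply w j
    rw [Fintype.card_fin, sum_integral_comp_add_div hfi k] at hsum
    rw [h.integral_ilhs_succ (Φ := fun x => f (x j)) (hf.comp (measurable_pi_apply j))
      (fun _ => hfM _), Finset.sum_congr rfl fun π _ => hterm π,
      mul_left_cancel₀ hk (hsum.trans (mul_left_comm _ _ _))]
    field_simp

lemma IsILHS.integral_ilhs_succ_mul (h : IsILHS μ U0 σ) {f g : ℝ → ℝ} (hf : Measurable f)
    {Mf : ℝ} (hfM : ∀ x, |f x| ≤ Mf) (hg : Measurable g) {Mg : ℝ} (hgM : ∀ x, |g x| ≤ Mg)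
    (T : ℕ) (i j : Fin k) :
    ∫ ω, f (ilhs U0 σ (T + 1) i ω) * g (ilhs U0 σ (T + 1) j ω) ∂μ =
      (k ! : ℝ)⁻¹ * ∑ π : Equiv.Perm (Fin k), ∫ ω, f (((π i : ℕ) + ilhs U0 σ T i ω) / k) *
        g (((π j : ℕ) + ilhs U0 σ T j ω) / k) ∂μ :=
  h.integral_ilhs_succ (Φ := fun x => f (x i) * g (x j)) (by fun_prop)
    (fun x => by
      rw [abs_mul]
      exact mul_le_mul (hfM _) (hgM _) (abs_nonneg _) ((abs_nonneg _).trans (hfM 0))) T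

lemma IsILHS.integral_ilhs_one_mul_le (h : IsILHS μ U0 σ) {i j : Fin k} (hij : i ≠ j)
    {f g : ℝ → ℝ} (hf : Monotone f) {Mf : ℝ} (hfM : ∀ x, |f x| ≤ Mf) (hg : Monotone g) {Mg : ℝ}
    (hgM : ∀ x, |g x| ≤ Mg) :
    ∫ ω, f (ilhs U0 σ 1 i ω) * g (ilhs U0 σ 1 j ω) ∂μ ≤
      ∫ ω, f (ilhs U0 σ 0 i ω) * g (ilhs U0 σ 0 j ω) ∂μ := by
  have hk : (0 : ℝ) < k := by have := i.pos; positivity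
  let u : Fin k → ℝ := fun a => ∫ x in (0 : ℝ)..1, f (((a : ℕ) + x) / k)
  let v : Fin k → ℝ := fun a => ∫ x in (0 : ℝ)..1, g (((a : ℕ) + x) / k)
  have hcast : Monotone fun a : Fin k => ((a : ℕ) : ℝ) := fun a b hab => Nat.cast_le.2 hab
  have huv : Monovary u v := ((monotone_integral_comp_add_div hf k).comp hcast).monovary
    ((monotone_integral_comp_add_div hg k).comp hcast)
  have hperm := card_sq_mul_sum_perm_apply_mul_apply_le huv hij
  rw [Fintype.card_fin] at hperm
  calc ∫ ω, f (ilhs U0 σ 1 i ω) * g (ilhs U0 σ 1 j ω) ∂μ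
      = (k ! : ℝ)⁻¹ * ∑ π : Equiv.Perm (Fin k), u (π i) * v (π j) := by
        rw [h.integral_ilhs_succ_mul hf.measurable hfM hg.measurable hgM 0 i j]
        exact congr_arg _ (Finset.sum_congr rfl fun π _ =>
          h.integral_mul_U0 hij (f := fun x => f (((π i : ℕ) + x) / k))
            (g := fun x => g (((π j : ℕ) + x) / k)) (hf.measurable.comp (by fun_prop))
            (hg.measurable.comp (by fun_prop)))
    _ ≤ (∑ a, u a / k) * ∑ a, v a / k := by
        rw [← Finset.sum_div, ← Finset.sum_div, div_mul_div_comm, inv_mul_le_iff₀ (by positivity),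
          ← mul_div_assoc, le_div_iff₀ (by positivity)]
        linarith
    _ = (∫ x in (0 : ℝ)..1, f x) * ∫ x in (0 : ℝ)..1, g x := by
        rw [← Finset.sum_div, ← Finset.sum_div, sum_integral_comp_add_div hf.intervalIntegrable,
          sum_integral_comp_add_div hg.intervalIntegrable]
        field_simp
    _ = _ := (h.integral_mul_U0 hij hf.measurable hg.measurable).symm

lemma IsILHS.integral_ilhs_succ_mul_le (h : IsILHS μ U0 σ) {i j : Fin k} (hij : i ≠ j) (T : ℕ)
    {f g : ℝ → ℝ} (hf : Monotone f) {Mf : ℝ} (hfM : ∀ x, |f x| ≤ Mf) (hg : Monotone g) {Mg : ℝ}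
    (hgM : ∀ x, |g x| ≤ Mg) :
    ∫ ω, f (ilhs U0 σ (T + 1) i ω) * g (ilhs U0 σ (T + 1) j ω) ∂μ ≤
      ∫ ω, f (ilhs U0 σ T i ω) * g (ilhs U0 σ T j ω) ∂μ := by
  induction T generalizing f g with
  | zero => exact h.integral_ilhs_one_mul_le hij hf hfM hg hgM
  | succ T ih =>
    rw [h.integral_ilhs_succ_mul hf.measurable hfM hg.measurable hgM (T + 1),
      h.integral_ilhs_succ_mul hf.measurable hfM hg.measurable hgM T]
    refine mul_le_mul_of_nonneg_left (Finset.sum_le_sum fun π _ => ?_) (by positivity)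
    exact ih (f := fun x => f (((π i : ℕ) + x) / k)) (g := fun x => g (((π j : ℕ) + x) / k))
      (hf.comp fun _ _ hxy => by gcongr) (fun _ => hfM _)
      (hg.comp fun _ _ hxy => by gcongr) (fun _ => hgM _)

lemma IsILHS.covar_ilhs_succ_le (h : IsILHS μ U0 σ) {i j : Fin k} (hij : i ≠ j) {f g : ℝ → ℝ}
    (hf : Monotone f) {Mf : ℝ} (hfM : ∀ x, |f x| ≤ Mf) (hg : Monotone g) {Mg : ℝ}
    (hgM : ∀ x, |g x| ≤ Mg) (T : ℕ) :
    covar μ (fun ω => f (ilhs U0 σ (T + 1) i ω)) (fun ω => g (ilhs U0 σ (T + 1) j ω)) ≤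
      covar μ (fun ω => f (ilhs U0 σ T i ω)) (fun ω => g (ilhs U0 σ T j ω)) := by
  simp only [covar, h.integral_comp_ilhs hf.measurable hfM, h.integral_comp_ilhs hg.measurable hgM]
  exact sub_le_sub_right (h.integral_ilhs_succ_mul_le hij T hf hfM hg hgM) _

lemma IsILHS.covar_ilhs_succ_le_of_monotoneOn (h : IsILHS μ U0 σ) {i j : Fin k} (hij : i ≠ j)
    {f g : ℝ → ℝ} (hf : MonotoneOn f (Set.Icc 0 1)) (hg : MonotoneOn g (Set.Icc 0 1)) (T : ℕ) :
    covar μ (fun ω => f (ilhs U0 σ (T + 1) i ω)) (fun ω => g (ilhs U0 σ (T + 1) j ω)) ≤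
      covar μ (fun ω => f (ilhs U0 σ T i ω)) (fun ω => g (ilhs U0 σ T j ω)) := by
  obtain ⟨F, hF, ⟨Mf, hFM⟩, hFf⟩ := hf.exists_bounded_monotone_eqOn zero_le_one
  obtain ⟨G, hG, ⟨Mg, hGM⟩, hGg⟩ := hg.exists_bounded_monotone_eqOn zero_le_one
  have hae : ∀ {f₁ f₂ : ℝ → ℝ}, Set.EqOn f₂ f₁ (Set.Icc 0 1) → ∀ t j,
      (fun ω => f₁ (ilhs U0 σ t j ω)) =ᵐ[μ] fun ω => f₂ (ilhs U0 σ t j ω) := fun heq t j =>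
    (h.ae_ilhs_mem_Ioo t j).mono fun ω hω => (heq (Set.Ioo_subset_Icc_self hω)).symm
  rw [covar_congr_ae (hae hFf _ _) (hae hGg _ _), covar_congr_ae (hae hFf _ _) (hae hGg _ _)]
  exact h.covar_ilhs_succ_le hij hF hFM hG hGM T

end ILHS

/-- For a monotone square-integrable function `h` on `[0,1]`,
`Cov(h(U_{T+1}⁽¹⁾), h(U_{T+1}⁽²⁾))` is nonincreasing in `T` along the ILHS iteration. -/
theorem ilhs_cov_antitone {Ω : Type*} [MeasurableSpace Ω] (μ : Measure Ω)
    [IsProbabilityMeasure μ] {k : ℕ} (hk : 2 ≤ k)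
    (U0 : Fin k → Ω → ℝ) (σ : ℕ → Ω → Equiv.Perm (Fin k)) (h : IsILHS μ U0 σ)
    (h₀ : ℝ → ℝ)
    (hmono : MonotoneOn h₀ (Set.Icc (0 : ℝ) 1) ∨ AntitoneOn h₀ (Set.Icc (0 : ℝ) 1)) :
    ∀ T : ℕ,
      covar μ (fun ω => h₀ (ilhs U0 σ (T + 1) ⟨0, by omega⟩ ω))
          (fun ω => h₀ (ilhs U0 σ (T + 1) ⟨1, by omega⟩ ω)) ≤
      covar μ (fun ω => h₀ (ilhs U0 σ T ⟨0, by omega⟩ ω))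
          (fun ω => h₀ (ilhs U0 σ T ⟨1, by omega⟩ ω)) := by
  intro T
  have hij : (⟨0, by omega⟩ : Fin k) ≠ ⟨1, by omega⟩ := by simp
  rcases hmono with hmono | hanti
  · exact h.covar_ilhs_succ_le_of_monotoneOn hij hmono hmono T
  · simpa only [Pi.neg_apply, covar_neg_neg] using
      h.covar_ilhs_succ_le_of_monotoneOn hij hanti.neg hanti.neg T
end

section
/- Fix an integer k ≥ 2. Let σ be a uniformly distributed random permutation of {0, 1, …, k−1}, let V_1, V_2 be i.i.d. Uniform(0,1) random variables independent of σ, and set U_j = (σ(j) + V_j)/k for j = 1, 2 (where σ(1), σ(2) denote the images of two fixed distinct elements under σ). Then each U_j is distributed Uniform(0,1), and for all 0 ≤ u ≤ v ≤ 1 the joint CDF F(u,v) = P(U_1 ≤ u, U_2 ≤ v) is given by: F(u,v) = 0 if ⌊kv⌋ = 0; F(u,v) = (ku(kv − 1) − {ku}({kv} − 1))/(k(k−1)) if 0 < ⌊kv⌋ = ⌊ku⌋; and F(u,v) = u(kv − 1)/(k−1) if ⌊kv⌋ > ⌊ku⌋. Here ⌊x⌋ and {x} denote the integer part and the fractional part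 of x. -/
/-!
Write `G` for the distribution function of Uniform(0,1), `x = k u`, `y = k v`. On the event
`σ = π` the two coordinates only involve `V₀` and `V₁`, so by independence
`P(U₁ ≤ u, U₂ ≤ v) = E[G(x - σ a) G(y - σ b)]`. Since `Perm` is 2-transitive, `(σ a, σ b)` is
uniform on the `k (k - 1)` pairs of distinct points, and the probability is
`(∑_{m,n} - ∑_{m = n}) G(x - m) G(y - n) / (k (k - 1))`. As `∑_{m < k} G(x - m) = x` on `[0, k]`,
the full double sum is `x y`; on the diagonal every term is `0` or `1` except the one at
`m = ⌊x⌋`, which gives `⌊x⌋ + {x} G(y - ⌊x⌋)`. The marginals are the one-point version of the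
same computation.
-/

open MeasureTheory ProbabilityTheory

def lhsβ (k : ℕ) : Fin 2 ⊕ Unit → Type
  | Sum.inl _ => ℝ
  | Sum.inr _ => Equiv.Perm (Fin k)

instance lhsβMeasurableSpace (k : ℕ) : ∀ x, MeasurableSpace (lhsβ k x)
  | Sum.inl _ => (inferInstance : MeasurableSpace ℝ)
  | Sum.inr _ => (inferInstance : MeasurableSpace (Equiv.Perm (Fin k)))

def lhsFam {Ω : Type*} {k : ℕ} (V : Fin 2 → Ω → ℝ)
    (σ : Ω → Equiv.Perm (Fin k)) : ∀ x : Fin 2 ⊕ Unit, Ω → lhsβ k x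
  | Sum.inl i => V i
  | Sum.inr _ => σ

open Finset

noncomputable def uniformCdf (x : ℝ) : ℝ := max 0 (min x 1)

section UniformCdf

variable {x y : ℝ}

theorem uniformCdf_nonneg (x : ℝ) : 0 ≤ uniformCdf x := le_max_left _ _

theorem uniformCdf_of_nonpos (h : x ≤ 0) : uniformCdf x = 0 := by
  simp [uniformCdf, min_le_of_left_le h]

theorem uniformCdf_of_one_le (h : 1 ≤ x) : uniformCdf x = 1 := by
  simp [uniformCdf, h]

theorem uniformCdf_of_nonneg_of_le_one (h₀ : 0 ≤ x) (h₁ : x ≤ 1) : uniformCdf x = x := by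
  simp [uniformCdf, h₀, h₁]

theorem volume_restrict_Ioo_Iic (c : ℝ) :
    volume.restrict (Set.Ioo (0 : ℝ) 1) (Set.Iic c) = ENNReal.ofReal (uniformCdf c) := by
  rw [Measure.restrict_apply measurableSet_Iic, Set.inter_comm,
    measure_congr ((Ioo_ae_eq_Ioc (μ := volume)).inter (ae_eq_refl (Set.Iic c))),
    Set.Ioc_inter_Iic, Real.volume_Ioc, sub_zero, uniformCdf, ENNReal.ofReal_max,
    ENNReal.ofReal_zero, min_comm]
  simp

theorem sum_range_uniformCdf_sub (hx : 0 ≤ x) (N : ℕ) :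
    ∑ m ∈ range N, uniformCdf (x - m) = min x N := by
  induction N with
  | zero => simp [hx]
  | succ N ih =>
    rw [sum_range_succ, ih, Nat.cast_succ]
    rcases le_total x N with h | h
    · rw [uniformCdf_of_nonpos (by linarith), min_eq_left h, min_eq_left (by linarith), add_zero]
    rcases le_total x (N + 1) with h' | h'
    · rw [uniformCdf_of_nonneg_of_le_one (by linarith) (by linarith), min_eq_right h,
        min_eq_left h']
      ring
    · rw [uniformCdf_of_one_le (by linarith), min_eq_right h, min_eq_right h']

theorem sum_range_uniformCdf_natCast_mul_sub {k : ℕ} (hk : 0 < k) (t : ℝ) :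
    ∑ m ∈ range k, uniformCdf (k * t - m) = k * uniformCdf t := by
  rcases le_total t 0 with ht | ht
  · rw [uniformCdf_of_nonpos ht, mul_zero]
    refine sum_eq_zero fun m _ => uniformCdf_of_nonpos ?_
    nlinarith [(m.cast_nonneg : (0 : ℝ) ≤ m), (k.cast_nonneg : (0 : ℝ) ≤ k)]
  · rw [sum_range_uniformCdf_sub (by positivity), uniformCdf, max_eq_right (by positivity),
      mul_min_of_nonneg _ _ k.cast_nonneg, mul_one, mul_comm]

theorem sum_range_uniformCdf_sub_mul_uniformCdf_sub {N : ℕ} (hx : 0 ≤ x) (hxy : x ≤ y)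
    (hxN : x ≤ N) :
    ∑ m ∈ range N, uniformCdf (x - m) * uniformCdf (y - m)
      = ⌊x⌋ + Int.fract x * uniformCdf (y - ⌊x⌋) := by
  set n := ⌊x⌋₊
  have hn : (n : ℝ) = ⌊x⌋ := natCast_floor_eq_intCast_floor hx
  -- only `m = ⌊x⌋` can have both `x - m > 0` and `y - m < 1`
  have hdefect : ∑ m ∈ range N, uniformCdf (x - m) * (1 - uniformCdf (y - m))
      = Int.fract x * (1 - uniformCdf (y - ⌊x⌋)) := by
    have hfract : x - n = Int.fract x := by rw [hn, Int.self_sub_floor]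
    rw [sum_eq_single n, hfract, ← hn, uniformCdf_of_nonneg_of_le_one (Int.fract_nonneg x)
      (Int.fract_lt_one x).le]
    · intro m _ hmn
      rcases lt_or_gt_of_ne hmn with h | h
      · have : (m : ℝ) + 1 ≤ n := by exact_mod_cast h
        rw [uniformCdf_of_one_le (x := y - m) (by linarith [Nat.floor_le hx]), sub_self,
          mul_zero]
      · have : (n : ℝ) + 1 ≤ m := by exact_mod_cast h
        rw [uniformCdf_of_nonpos (by linarith [Nat.lt_floor_add_one x]), zero_mul]
    · intro h
      have : (N : ℝ) ≤ n := by exact_mod_cast not_lt.mp (mem_range.not.mp h)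
      rw [uniformCdf_of_nonpos (by linarith), zero_mul]
  calc ∑ m ∈ range N, uniformCdf (x - m) * uniformCdf (y - m)
      = ∑ m ∈ range N, uniformCdf (x - m)
          - ∑ m ∈ range N, uniformCdf (x - m) * (1 - uniformCdf (y - m)) := by
        rw [← sum_sub_distrib]
        congr! 1 with m
        ring
    _ = ⌊x⌋ + Int.fract x * uniformCdf (y - ⌊x⌋) := by
        rw [hdefect, sum_range_uniformCdf_sub hx, min_eq_left hxN, Int.fract]
        ring

theorem sum_mul_sum_sub_sum_uniformCdf_mul {N : ℕ} (hx : 0 ≤ x) (hxy : x ≤ y) (hyN : y ≤ N) :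
    (∑ m ∈ range N, uniformCdf (x - m)) * (∑ n ∈ range N, uniformCdf (y - n))
        - ∑ m ∈ range N, uniformCdf (x - m) * uniformCdf (y - m)
      = if ⌊y⌋ = 0 then 0
        else if ⌊x⌋ = ⌊y⌋ then x * (y - 1) - Int.fract x * (Int.fract y - 1)
        else x * (y - 1) := by
  rw [sum_range_uniformCdf_sub hx, sum_range_uniformCdf_sub (hx.trans hxy),
    min_eq_left (hxy.trans hyN), min_eq_left hyN,
    sum_range_uniformCdf_sub_mul_uniformCdf_sub hx hxy (hxy.trans hyN)]
  split_ifs with hy hxy'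
  · have hy1 : y < 1 := by simpa [hy] using Int.lt_floor_add_one y
    rw [Int.floor_eq_zero_iff.mpr ⟨hx, by linarith⟩, Int.fract_eq_self.mpr ⟨hx, by linarith⟩,
      Int.cast_zero, sub_zero, uniformCdf_of_nonneg_of_le_one (hx.trans hxy) hy1.le]
    ring
  · have hfloor : (⌊x⌋ : ℝ) = ⌊y⌋ := by rw [hxy']
    rw [hxy', ← Int.fract,
      uniformCdf_of_nonneg_of_le_one (Int.fract_nonneg y) (Int.fract_lt_one y).le]
    linear_combination (Int.floor_add_fract x).symm + hfloor
  · have : (⌊x⌋ : ℝ) + 1 ≤ ⌊y⌋ := by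
      exact_mod_cast lt_of_le_of_ne (Int.floor_le_floor hxy) hxy'
    rw [uniformCdf_of_one_le (by linarith [Int.floor_le y]), Int.fract]
    ring

end UniformCdf

theorem MulAction.card_nsmul_sum_smul {G X M : Type*} [Group G] [Fintype G] [MulAction G X]
    [Fintype X] [AddCommMonoid M] [IsPretransitive G X] (x : X) (f : X → M) :
    Fintype.card X • ∑ g : G, f (g • x) = Fintype.card G • ∑ y, f y := by
  have hconst (y : X) : ∑ g : G, f (g • y) = ∑ g : G, f (g • x) := by
    obtain ⟨h, rfl⟩ := exists_smul_eq G x y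
    simp_rw [smul_smul]
    exact Equiv.sum_comp (Equiv.mulRight h) (fun g => f (g • x))
  calc Fintype.card X • ∑ g : G, f (g • x) = ∑ y : X, ∑ g : G, f (g • y) := by
        simp [hconst, card_univ]
    _ = ∑ g : G, ∑ y, f (g • y) := sum_comm
    _ = ∑ _g : G, ∑ y, f y := sum_congr rfl fun g _ => Equiv.sum_comp (toPerm g) f
    _ = Fintype.card G • ∑ y, f y := by simp [card_univ]

open Function.Embedding in
theorem sum_embedding_fin_two {α M : Type*} [Fintype α] [DecidableEq α] [AddCommGroup M]
    (f : α → α → M) :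
    ∑ e : Fin 2 ↪ α, f (e 0) (e 1) = ∑ m, ∑ n, f m n - ∑ m, f m m := by
  rw [eq_sub_iff_add_eq, ← sum_product', ← diag_union_offDiag univ,
    sum_union (disjoint_diag_offDiag _), sum_diag, add_comm]
  congr 1
  rw [Fintype.sum_equiv twoEmbeddingEquiv (fun e => f (e 0) (e 1)) (fun q => f q.1.1 q.1.2)
    (fun _ => rfl)]
  refine (sum_subtype _ (fun p => ?_) (fun p : α × α => f p.1 p.2)).symm
  simp

section PermAverage

variable {α : Type*} [Fintype α] [DecidableEq α]

theorem card_mul_sum_perm_apply_s18 (a : α) (f : α → ℝ) :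
    Fintype.card α * ∑ π : Equiv.Perm α, f (π a) = (Fintype.card α).factorial * ∑ m, f m := by
  simpa [Fintype.card_perm] using MulAction.card_nsmul_sum_smul (G := Equiv.Perm α) a f

theorem card_mul_card_sub_one_mul_sum_perm_apply_apply {a b : α} (hab : a ≠ b)
    (f : α → α → ℝ) :
    Fintype.card α * (Fintype.card α - 1) * ∑ π : Equiv.Perm α, f (π a) (π b)
      = (Fintype.card α).factorial * (∑ m, ∑ n, f m n - ∑ m, f m m) := by
  have := Equiv.Perm.isMultiplyPretransitive α 2
  have hcard : (Fintype.card (Fin 2 ↪ α) : ℝ) = Fintype.card α * (Fintype.card α - 1) := by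
    rw [Fintype.card_embedding_eq, Fintype.card_fin, Nat.descFactorial_succ,
      Nat.descFactorial_one, Nat.cast_mul, Nat.cast_sub (Fintype.card_pos_iff.mpr ⟨a⟩)]
    push_cast
    ring
  have h := MulAction.card_nsmul_sum_smul (G := Equiv.Perm α) (Function.Embedding.embFinTwo hab)
    (fun e => f (e 0) (e 1))
  simp only [Function.Embedding.smul_apply, Equiv.Perm.smul_def,
    Function.Embedding.embFinTwo_apply_zero, Function.Embedding.embFinTwo_apply_one,
    nsmul_eq_mul, hcard, Fintype.card_perm] at h
  rw [h, sum_embedding_fin_two]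

end PermAverage

theorem ProbabilityTheory.IndepFun.measureReal_inter_preimage_eq_mul {Ω β γ : Type*}
    [MeasurableSpace Ω] [MeasurableSpace β] [MeasurableSpace γ] {μ : Measure Ω}
    {f : Ω → β} {g : Ω → γ} (h : IndepFun f g μ) {s : Set β} {t : Set γ}
    (hs : MeasurableSet s) (ht : MeasurableSet t) :
    μ.real (f ⁻¹' s ∩ g ⁻¹' t) = μ.real (f ⁻¹' s) * μ.real (g ⁻¹' t) := by
  simp [measureReal_def, h.measure_inter_preimage_eq_mul s t hs ht]

theorem measureReal_eq_sum_inter_preimage_singleton {Ω ι : Type*} [MeasurableSpace Ω]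
    {μ : Measure Ω} [IsFiniteMeasure μ] [Fintype ι] {Z : Ω → ι}
    (hZ : ∀ i, MeasurableSet (Z ⁻¹' {i})) (E : Set Ω) :
    μ.real E = ∑ i, μ.real (E ∩ Z ⁻¹' {i}) := by
  have h := sum_measureReal_preimage_singleton (μ := μ.restrict E) univ fun i _ => hZ i
  simp only [coe_univ, Set.preimage_univ, measureReal_restrict_apply (hZ _),
    measureReal_restrict_apply MeasurableSet.univ, Set.univ_inter] at h
  simp_rw [← h, Set.inter_comm]

theorem measureReal_preimage_Iic_eq_uniformCdf {Ω : Type*} [MeasurableSpace Ω] {μ : Measure Ω}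
    {X : Ω → ℝ} (hX : Measurable X) (hlaw : μ.map X = volume.restrict (Set.Ioo (0 : ℝ) 1))
    (c : ℝ) : μ.real (X ⁻¹' Set.Iic c) = uniformCdf c := by
  rw [measureReal_def, ← Measure.map_apply hX measurableSet_Iic, hlaw, volume_restrict_Ioo_Iic,
    ENNReal.toReal_ofReal (uniformCdf_nonneg c)]

theorem add_div_le_iff_le_mul_sub {m w k t : ℝ} (hk : 0 < k) :
    (m + w) / k ≤ t ↔ w ≤ k * t - m := by
  rw [div_le_iff₀ hk]
  constructor <;> intro <;> linarith

section LatinHypercube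

variable {Ω : Type*} [MeasurableSpace Ω] {μ : Measure Ω} {k : ℕ} {V : Fin 2 → Ω → ℝ}
  {σ : Ω → Equiv.Perm (Fin k)}

theorem measurable_lhsFam (hVm : ∀ i, Measurable (V i)) (hσm : Measurable σ) :
    ∀ x, Measurable (lhsFam V σ x)
  | Sum.inl i => hVm i
  | Sum.inr _ => hσm

theorem measureReal_preimage_perm
    (hσlaw : ∀ π : Equiv.Perm (Fin k), μ {ω | σ ω = π} = ((Nat.factorial k : ENNReal))⁻¹)
    (π : Equiv.Perm (Fin k)) : μ.real (σ ⁻¹' {π}) = ((Nat.factorial k : ℝ))⁻¹ := by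
  change (μ {ω | σ ω = π}).toReal = _
  simp [hσlaw π]

variable [IsFiniteMeasure μ]

theorem measureReal_lhs_coord_le (hVm : ∀ i, Measurable (V i)) (hσm : Measurable σ)
    (hVlaw : ∀ i, μ.map (V i) = volume.restrict (Set.Ioo (0 : ℝ) 1))
    (hσlaw : ∀ π : Equiv.Perm (Fin k), μ {ω | σ ω = π} = ((Nat.factorial k : ENNReal))⁻¹)
    (hindep : iIndepFun (lhsFam V σ) μ) (e : Fin k) (j : Fin 2) (t : ℝ) :
    μ.real {ω | (((σ ω e : ℕ) : ℝ) + V j ω) / k ≤ t} = uniformCdf t := by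
  have hk : (0 : ℝ) < k := Nat.cast_pos.mpr e.pos
  have hind : IndepFun (V j) σ μ :=
    hindep.indepFun (i := Sum.inl j) (j := Sum.inr ()) Sum.inl_ne_inr
  have hslice (π : Equiv.Perm (Fin k)) :
      μ.real ({ω | (((σ ω e : ℕ) : ℝ) + V j ω) / k ≤ t} ∩ σ ⁻¹' {π})
        = (k.factorial : ℝ)⁻¹ * uniformCdf (k * t - (π e : ℕ)) := by
    have hset : {ω | (((σ ω e : ℕ) : ℝ) + V j ω) / k ≤ t} ∩ σ ⁻¹' {π}
        = V j ⁻¹' Set.Iic (k * t - (π e : ℕ)) ∩ σ ⁻¹' {π} := by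
      ext ω
      simp +contextual [add_div_le_iff_le_mul_sub hk]
    rw [hset, hind.measureReal_inter_preimage_eq_mul measurableSet_Iic
      (MeasurableSpace.measurableSet_top), measureReal_preimage_Iic_eq_uniformCdf (hVm j) (hVlaw j),
      measureReal_preimage_perm hσlaw, mul_comm]
  have hsum := card_mul_sum_perm_apply_s18 e fun m : Fin k => uniformCdf (k * t - (m : ℕ))
  rw [Fintype.card_fin, Fin.sum_univ_eq_sum_range (fun m => uniformCdf (k * t - m)),
    sum_range_uniformCdf_natCast_mul_sub e.pos] at hsum
  rw [measureReal_eq_sum_inter_preimage_singleton (fun π => hσm MeasurableSpace.measurableSet_top),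
    Fintype.sum_congr _ _ hslice, ← mul_sum, inv_mul_eq_iff_eq_mul₀ (by positivity)]
  exact mul_left_cancel₀ hk.ne' (by rw [hsum]; ring)

theorem mul_measureReal_lhs_pair_le (hVm : ∀ i, Measurable (V i)) (hσm : Measurable σ)
    (hVlaw : ∀ i, μ.map (V i) = volume.restrict (Set.Ioo (0 : ℝ) 1))
    (hσlaw : ∀ π : Equiv.Perm (Fin k), μ {ω | σ ω = π} = ((Nat.factorial k : ENNReal))⁻¹)
    (hindep : iIndepFun (lhsFam V σ) μ) {a b : Fin k} (hab : a ≠ b) (u v : ℝ) :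
    k * (k - 1) * μ.real {ω | (((σ ω a : ℕ) : ℝ) + V 0 ω) / k ≤ u ∧
        (((σ ω b : ℕ) : ℝ) + V 1 ω) / k ≤ v}
      = (∑ m ∈ range k, uniformCdf (k * u - m)) * (∑ n ∈ range k, uniformCdf (k * v - n))
        - ∑ m ∈ range k, uniformCdf (k * u - m) * uniformCdf (k * v - m) := by
  have hk : (0 : ℝ) < k := Nat.cast_pos.mpr a.pos
  have hind : IndepFun (fun ω => (V 0 ω, V 1 ω)) σ μ :=
    hindep.indepFun_prodMk (measurable_lhsFam hVm hσm) (Sum.inl 0) (Sum.inl 1) (Sum.inr ())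
      Sum.inl_ne_inr Sum.inl_ne_inr
  have hV : IndepFun (V 0) (V 1) μ := hindep.indepFun (i := Sum.inl 0) (j := Sum.inl 1) (by simp)
  have hslice (π : Equiv.Perm (Fin k)) :
      μ.real ({ω | (((σ ω a : ℕ) : ℝ) + V 0 ω) / k ≤ u ∧
        (((σ ω b : ℕ) : ℝ) + V 1 ω) / k ≤ v} ∩ σ ⁻¹' {π})
        = (k.factorial : ℝ)⁻¹ *
            (uniformCdf (k * u - (π a : ℕ)) * uniformCdf (k * v - (π b : ℕ))) := by
    have hset : {ω | (((σ ω a : ℕ) : ℝ) + V 0 ω) / k ≤ u ∧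
        (((σ ω b : ℕ) : ℝ) + V 1 ω) / k ≤ v} ∩ σ ⁻¹' {π}
        = (fun ω => (V 0 ω, V 1 ω)) ⁻¹'
            (Set.Iic (k * u - (π a : ℕ)) ×ˢ Set.Iic (k * v - (π b : ℕ))) ∩ σ ⁻¹' {π} := by
      ext ω
      simp +contextual [add_div_le_iff_le_mul_sub hk]
    rw [hset, hind.measureReal_inter_preimage_eq_mul (measurableSet_Iic.prod measurableSet_Iic)
      (MeasurableSpace.measurableSet_top), Set.mk_preimage_prod,
      hV.measureReal_inter_preimage_eq_mul measurableSet_Iic measurableSet_Iic,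
      measureReal_preimage_Iic_eq_uniformCdf (hVm 0) (hVlaw 0),
      measureReal_preimage_Iic_eq_uniformCdf (hVm 1) (hVlaw 1),
      measureReal_preimage_perm hσlaw, mul_comm]
  have hsum := card_mul_card_sub_one_mul_sum_perm_apply_apply hab
    fun m n : Fin k => uniformCdf (k * u - (m : ℕ)) * uniformCdf (k * v - (n : ℕ))
  rw [← sum_mul_sum, Fintype.card_fin,
    Fin.sum_univ_eq_sum_range (fun m => uniformCdf (k * u - m)),
    Fin.sum_univ_eq_sum_range (fun n => uniformCdf (k * v - n)),
    Fin.sum_univ_eq_sum_range (fun m => uniformCdf (k * u - m) * uniformCdf (k * v - m))] at hsum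
  rw [measureReal_eq_sum_inter_preimage_singleton (fun π => hσm MeasurableSpace.measurableSet_top),
    Fintype.sum_congr _ _ hslice, ← mul_sum, ← mul_assoc, mul_comm _ (k.factorial : ℝ)⁻¹,
    mul_assoc, hsum, ← mul_assoc, inv_mul_cancel₀ (by positivity), one_mul]

end LatinHypercube

/-- One step of Latin hypercube sampling: for a uniform random permutation `σ` of
`{0, …, k−1}` and i.i.d. Uniform(0,1) variables `V₁, V₂` independent of `σ`, the
variables `U_j = (σ(a_j) + V_j)/k` (for two fixed distinct elements `a₁ ≠ a₂`) are each
Uniform(0,1), and their joint CDF on `0 ≤ u ≤ v ≤ 1` is given by the displayed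
three-case formula. -/
theorem lhs_pair_cdf {Ω : Type*} [MeasurableSpace Ω] (μ : Measure Ω)
    [IsProbabilityMeasure μ] {k : ℕ} (hk : 2 ≤ k)
    (V : Fin 2 → Ω → ℝ) (σ : Ω → Equiv.Perm (Fin k))
    (hVm : ∀ i, Measurable (V i)) (hσm : Measurable σ)
    (hVlaw : ∀ i, μ.map (V i) = volume.restrict (Set.Ioo (0 : ℝ) 1))
    (hσlaw : ∀ π : Equiv.Perm (Fin k), μ {ω | σ ω = π} = ((Nat.factorial k : ENNReal))⁻¹)
    (hindep : iIndepFun (lhsFam V σ) μ)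
    (a b : Fin k) (hab : a ≠ b) :
    (∀ j : Fin 2,
      μ.map (fun ω => (((σ ω (![a, b] j) : ℕ) : ℝ) + V j ω) / k) =
        volume.restrict (Set.Ioo (0 : ℝ) 1)) ∧
    (∀ u v : ℝ, 0 ≤ u → u ≤ v → v ≤ 1 →
      (μ {ω | (((σ ω a : ℕ) : ℝ) + V 0 ω) / k ≤ u ∧
              (((σ ω b : ℕ) : ℝ) + V 1 ω) / k ≤ v}).toReal =
        if ⌊(k : ℝ) * v⌋ = 0 then 0
        else if ⌊(k : ℝ) * u⌋ = ⌊(k : ℝ) * v⌋ then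
          ((k : ℝ) * u * ((k : ℝ) * v - 1) -
            Int.fract ((k : ℝ) * u) * (Int.fract ((k : ℝ) * v) - 1)) /
            ((k : ℝ) * ((k : ℝ) - 1))
        else u * ((k : ℝ) * v - 1) / ((k : ℝ) - 1)) := by
  have hk2 : (2 : ℝ) ≤ k := by exact_mod_cast hk
  have hk0 : (0 : ℝ) < k := by linarith
  refine ⟨fun j => ?_, fun u v hu huv hv => ?_⟩
  · have hσ : Measurable fun ω => ((σ ω (![a, b] j) : ℕ) : ℝ) :=
      (measurable_from_top (f := fun π : Equiv.Perm (Fin k) => ((π (![a, b] j) : ℕ) : ℝ))).comp hσm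
    have hU : Measurable fun ω => (((σ ω (![a, b] j) : ℕ) : ℝ) + V j ω) / k :=
      (hσ.add (hVm j)).div_const _
    refine Measure.ext_of_Iic _ _ fun t => ?_
    rw [Measure.map_apply hU measurableSet_Iic, volume_restrict_Ioo_Iic, ← ofReal_measureReal]
    exact congrArg ENNReal.ofReal (measureReal_lhs_coord_le hVm hσm hVlaw hσlaw hindep _ j t)
  · have hpair := mul_measureReal_lhs_pair_le hVm hσm hVlaw hσlaw hindep hab u v
    rw [sum_mul_sum_sub_sum_uniformCdf_mul (by positivity) (by gcongr)
      (by simpa using mul_le_mul_of_nonneg_left hv hk0.le)] at hpair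
    have hkk : (k : ℝ) * (k - 1) ≠ 0 := mul_ne_zero hk0.ne' (by linarith)
    rw [← measureReal_def, eq_div_of_mul_eq hkk ((mul_comm _ _).trans hpair)]
    split_ifs
    · exact zero_div _
    · rfl
    · field_simp [show (k : ℝ) - 1 ≠ 0 by linarith]
end
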